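/- arXiv:1210.0184 — 5 statements merged into one kernel-verified Lean document; each statement's English description precedes it below -/
import Mathlib

section
/- A bounded invertible operator T = [[a,b],[c,d]] on K is J-unitary if and only if a*a − c*c = 1, d*d − b*b = 1 and a*b = c*d, and also if and only if aa* − bb* = 1, dd* − cc* = 1 and ac* = bd*. Moreover, for J-unitary T the diagonal blocks a and d are invertible with ‖a^{-1}‖ ≤ 1 and ‖d^{-1}‖ ≤ 1, and one has ‖a^{-1}b‖ < 1, ‖d^{-1}c‖ < 1, ‖bd^{-1}‖ < 1 and ‖ca^{-1}‖ < 1. -/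
/-!
Writing `T* J T` blockwise turns `T* J T = J` into the first set of identities. If `T` is
invertible, `T* J T = J` makes `J T* J` a left, hence two-sided, inverse of `T`, so that also
`T J T* = J`; blockwise this is the second set. From `a* a = 1 + c* c` and `a a* = 1 + b b*` the
block `a` is left and right invertible with `(a⁻¹)* a⁻¹ ≤ 1`, and `r = a⁻¹ b` satisfies
`r r* = 1 - a⁻¹ (a⁻¹)* ≤ (1 - ‖a a*‖⁻¹) • 1`, so `‖r‖ < 1`; the other blocks are symmetric.
-/

noncomputable section

open ContinuousLinearMap

variable {H : Type*} [NormedAddCommGroup H] [InnerProductSpace ℂ H] [CompleteSpace H]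
  [TopologicalSpace.SeparableSpace H]

local notation "K" => WithLp 2 (H × H)

/-- The 2×2 block operator `[[a,b],[c,d]]` on `K = H ⊕ H`. -/
def blk (a b c d : H →L[ℂ] H) : K →L[ℂ] K :=
  (((WithLp.prodContinuousLinearEquiv 2 ℂ H H).symm : (H × H) →L[ℂ] K).comp
      ((((a.comp (fst ℂ H H)) + (b.comp (snd ℂ H H))).prod
        ((c.comp (fst ℂ H H)) + (d.comp (snd ℂ H H)))))).comp
    ((WithLp.prodContinuousLinearEquiv 2 ℂ H H : K →L[ℂ] (H × H)))

/-- The fundamental symmetry `J = [[1,0],[0,-1]]`. -/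
def fundJ : K →L[ℂ] K := blk 1 0 0 (-1)

/-- A bounded operator `T` on the Krein space `(K, J)` is `J`-unitary if it is invertible
and `T* J T = J`. -/
def IsJUnitary (T : K →L[ℂ] K) : Prop :=
  IsUnit T ∧ star T * fundJ * T = fundJ

open Ring

theorem mul_mul_eq_of_mul_mul_eq {M : Type*} [Monoid M] {j s t : M} (hj : j * j = 1)
    (ht : IsUnit t) (h : s * j * t = j) : t * j * s = j := by
  obtain ⟨u, rfl⟩ := ht
  have hinv : ↑u⁻¹ = j * s * j :=
    Units.inv_eq_of_mul_eq_one_left (by simp only [mul_assoc] at h ⊢; rw [h, hj])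
  calc ↑u * j * s = ↑u * (j * s * j) * j := by simp only [mul_assoc, hj, mul_one]
    _ = j := by rw [← hinv, u.mul_inv, one_mul]

theorem isUnit_of_isUnit_mul_of_isUnit_mul {M : Type*} [Monoid M] {x y z : M}
    (hyx : IsUnit (y * x)) (hxz : IsUnit (x * z)) : IsUnit x :=
  isUnit_iff_exists_and_exists.2
    ⟨⟨z * ↑hxz.unit⁻¹, by rw [← mul_assoc, hxz.mul_val_inv]⟩,
      ⟨↑hyx.unit⁻¹ * y, by rw [mul_assoc, hyx.val_inv_mul]⟩⟩

namespace CStarAlgebra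

variable {A : Type*} [CStarAlgebra A] [PartialOrder A] [StarOrderedRing A]

theorem isUnit_of_one_le_star_mul_self_of_one_le_mul_star_self {x : A}
    (h₁ : 1 ≤ star x * x) (h₂ : 1 ≤ x * star x) : IsUnit x :=
  isUnit_of_isUnit_mul_of_isUnit_mul (isUnit_of_le 1 h₁) (isUnit_of_le 1 h₂)

theorem norm_ringInverse_le_one {x : A} (hx : IsUnit x) (h : 1 ≤ star x * x) :
    ‖x⁻¹ʳ‖ ≤ 1 := by
  nontriviality A
  have hle : star x⁻¹ʳ * x⁻¹ʳ ≤ 1 := by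
    simpa [← mul_assoc, ← star_mul, mul_assoc _ x, mul_inverse_cancel x hx]
      using star_left_conjugate_le_conjugate h x⁻¹ʳ
  have := norm_le_norm_of_nonneg_of_le (star_mul_self_nonneg _) hle
  rw [CStarRing.norm_star_mul_self, norm_one] at this
  nlinarith [norm_nonneg x⁻¹ʳ]

theorem norm_ringInverse_mul_lt_one {x y : A} (hx : IsUnit x)
    (h : x * star x - y * star y = 1) : ‖x⁻¹ʳ * y‖ < 1 := by
  nontriviality A
  set s := x⁻¹ʳ
  set n := ‖x * star x‖
  have hsx : s * x = 1 := inverse_mul_cancel x hx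
  have hxs : star x * star s = 1 := by rw [← star_mul, hsx, star_one]
  have hr : (s * y) * star (s * y) = 1 - s * star s :=
    calc (s * y) * star (s * y) = s * (y * star y) * star s := by
          simp only [star_mul, mul_assoc]
      _ = s * (x * star x - 1) * star s := by rw [← h, sub_sub_cancel]
      _ = 1 - s * star s := by
          simp only [mul_sub, sub_mul, mul_one, ← mul_assoc, hsx, one_mul, hxs]
  have hn : 1 ≤ n := by
    have h1 : 1 ≤ x * star x := h ▸ sub_le_self _ (mul_star_self_nonneg y)
    simpa using norm_le_norm_of_nonneg_of_le zero_le_one h1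
  -- conjugating `x x* ≤ n • 1` by `s` bounds `s s*` from below
  have hlow : n⁻¹ • (1 : A) ≤ s * star s := by
    have h1 : (1 : A) ≤ n • (s * star s) := by
      simpa only [Algebra.algebraMap_eq_smul_one, mul_smul_comm, smul_mul_assoc, mul_one,
        ← mul_assoc, hsx, one_mul, hxs] using star_right_conjugate_le_conjugate
        (IsSelfAdjoint.mul_star_self x).le_algebraMap_norm_self s
    have := smul_le_smul_of_nonneg_left h1 (inv_nonneg.2 (zero_le_one.trans hn))
    rwa [smul_smul, inv_mul_cancel₀ (by positivity), one_smul] at this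
  have hle : (s * y) * star (s * y) ≤ algebraMap ℝ A (1 - n⁻¹) := by
    rw [hr, map_sub, map_one, Algebra.algebraMap_eq_smul_one]
    exact sub_le_sub_left hlow 1
  have := norm_le_norm_of_nonneg_of_le (mul_star_self_nonneg _) hle
  rw [CStarRing.norm_self_mul_star, norm_algebraMap',
    Real.norm_of_nonneg (by simpa using inv_le_one_of_one_le₀ hn)] at this
  nlinarith [norm_nonneg (s * y), inv_pos.2 (one_pos.trans_le hn)]

theorem norm_mul_ringInverse_lt_one {x y : A} (hx : IsUnit x)
    (h : star x * x - star y * y = 1) : ‖y * x⁻¹ʳ‖ < 1 := by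
  rw [← norm_star, star_mul, ← inverse_star]
  exact norm_ringInverse_mul_lt_one hx.star (by simpa only [star_star] using h)

end CStarAlgebra

section

omit [CompleteSpace H] [TopologicalSpace.SeparableSpace H]

theorem blk_mul (a b c d a' b' c' d' : H →L[ℂ] H) :
    blk a b c d * blk a' b' c' d' =
      blk (a * a' + b * c') (a * b' + b * d') (c * a' + d * c') (c * b' + d * d') := by
  ext x
  simp [blk]
  exact ⟨by abel, by abel⟩

theorem blk_one : (blk 1 0 0 1 : K →L[ℂ] K) = 1 := by
  ext x
  simp [blk]
  rfl

theorem blk_inj {a b c d a' b' c' d' : H →L[ℂ] H} :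
    blk a b c d = blk a' b' c' d' ↔ a = a' ∧ b = b' ∧ c = c' ∧ d = d' := by
  refine ⟨fun h => ?_, by rintro ⟨rfl, rfl, rfl, rfl⟩; rfl⟩
  let e := WithLp.prodContinuousLinearEquiv 2 ℂ H H
  have h₁ (x : H) := congrArg (fun T : K →L[ℂ] K => e (T (e.symm (x, 0)))) h
  have h₂ (x : H) := congrArg (fun T : K →L[ℂ] K => e (T (e.symm (0, x)))) h
  simp [blk, e, Prod.ext_iff] at h₁ h₂
  exact ⟨ext fun x => (h₁ x).1, ext fun x => (h₂ x).1, ext fun x => (h₁ x).2,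
    ext fun x => (h₂ x).2⟩

theorem fundJ_mul_fundJ : (fundJ : K →L[ℂ] K) * fundJ = 1 := by
  rw [fundJ, blk_mul, ← blk_one]
  congr 1 <;> noncomm_ring

end

section

omit [TopologicalSpace.SeparableSpace H]

theorem star_blk (a b c d : H →L[ℂ] H) :
    star (blk a b c d) = blk (star a) (star c) (star b) (star d) := by
  rw [star_eq_adjoint, eq_comm, eq_adjoint_iff]
  intro x y
  simp [blk, WithLp.prod_inner_apply, star_eq_adjoint, adjoint_inner_left, inner_add_left,
    inner_add_right]
  ring

theorem star_blk_mul_fundJ_mul_blk (a b c d : H →L[ℂ] H) :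
    star (blk a b c d) * fundJ * blk a b c d =
      blk (star a * a - star c * c) (star a * b - star c * d)
        (star b * a - star d * c) (star b * b - star d * d) := by
  rw [star_blk, fundJ, blk_mul, blk_mul]
  congr 1 <;> noncomm_ring

theorem star_blk_mul_fundJ_mul_blk_eq_fundJ_iff (a b c d : H →L[ℂ] H) :
    star (blk a b c d) * fundJ * blk a b c d = fundJ ↔
      star a * a - star c * c = 1 ∧ star d * d - star b * b = 1 ∧ star a * b = star c * d := by
  rw [star_blk_mul_fundJ_mul_blk, fundJ, blk_inj]
  constructor
  · rintro ⟨h₁, h₂, -, h₄⟩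
    exact ⟨h₁, by rw [← neg_sub, h₄, neg_neg], sub_eq_zero.1 h₂⟩
  · rintro ⟨h₁, h₂, h₃⟩
    refine ⟨h₁, sub_eq_zero.2 h₃, sub_eq_zero.2 ?_, by rw [← neg_sub, h₂]⟩
    simpa only [star_mul, star_star] using congrArg star h₃

theorem IsJUnitary.star {T : K →L[ℂ] K} (hT : IsJUnitary T) : IsJUnitary (star T) :=
  ⟨hT.1.star, by rw [star_star]; exact mul_mul_eq_of_mul_mul_eq fundJ_mul_fundJ hT.1 hT.2⟩

theorem isJUnitary_star_iff {T : K →L[ℂ] K} : IsJUnitary (star T) ↔ IsJUnitary T :=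
  ⟨fun h => star_star T ▸ h.star, IsJUnitary.star⟩

theorem isJUnitary_blk_iff (a b c d : H →L[ℂ] H) :
    IsJUnitary (blk a b c d) ↔ IsUnit (blk a b c d) ∧
      star a * a - star c * c = 1 ∧ star d * d - star b * b = 1 ∧ star a * b = star c * d :=
  Iff.rfl.and (star_blk_mul_fundJ_mul_blk_eq_fundJ_iff a b c d)

theorem isJUnitary_blk_iff' (a b c d : H →L[ℂ] H) :
    IsJUnitary (blk a b c d) ↔ IsUnit (blk a b c d) ∧
      a * star a - b * star b = 1 ∧ d * star d - c * star c = 1 ∧ a * star c = b * star d := by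
  rw [← isJUnitary_star_iff, star_blk, isJUnitary_blk_iff, ← star_blk, isUnit_star]
  simp only [star_star]

end

/-- Proposition 3.1 of the paper: the block characterization of
`J`-unitary operators, together with the invertibility of `a`, `d` and the norm estimates
on `a⁻¹`, `d⁻¹`, `a⁻¹b`, `d⁻¹c`, `bd⁻¹`, `ca⁻¹`. -/
theorem jUnitary_block_characterization (a b c d : H →L[ℂ] H) :
    (IsJUnitary (blk a b c d) ↔
      IsUnit (blk a b c d) ∧
        star a * a - star c * c = 1 ∧ star d * d - star b * b = 1 ∧
        star a * b = star c * d) ∧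
    (IsJUnitary (blk a b c d) ↔
      IsUnit (blk a b c d) ∧
        a * star a - b * star b = 1 ∧ d * star d - c * star c = 1 ∧
        a * star c = b * star d) ∧
    (IsJUnitary (blk a b c d) →
      IsUnit a ∧ IsUnit d ∧
        ‖Ring.inverse a‖ ≤ 1 ∧ ‖Ring.inverse d‖ ≤ 1 ∧
        ‖Ring.inverse a * b‖ < 1 ∧ ‖Ring.inverse d * c‖ < 1 ∧
        ‖b * Ring.inverse d‖ < 1 ∧ ‖c * Ring.inverse a‖ < 1) := by
  refine ⟨isJUnitary_blk_iff a b c d, isJUnitary_blk_iff' a b c d, fun h => ?_⟩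
  obtain ⟨-, ha₁, hd₁, -⟩ := (isJUnitary_blk_iff a b c d).1 h
  obtain ⟨-, ha₂, hd₂, -⟩ := (isJUnitary_blk_iff' a b c d).1 h
  have ha₁' : 1 ≤ star a * a := ha₁ ▸ sub_le_self _ (star_mul_self_nonneg c)
  have hd₁' : 1 ≤ star d * d := hd₁ ▸ sub_le_self _ (star_mul_self_nonneg b)
  have ha : IsUnit a := CStarAlgebra.isUnit_of_one_le_star_mul_self_of_one_le_mul_star_self
    ha₁' (ha₂ ▸ sub_le_self _ (mul_star_self_nonneg b))
  have hd : IsUnit d := CStarAlgebra.isUnit_of_one_le_star_mul_self_of_one_le_mul_star_self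
    hd₁' (hd₂ ▸ sub_le_self _ (mul_star_self_nonneg c))
  exact ⟨ha, hd, CStarAlgebra.norm_ringInverse_le_one ha ha₁',
    CStarAlgebra.norm_ringInverse_le_one hd hd₁', CStarAlgebra.norm_ringInverse_mul_lt_one ha ha₂,
    CStarAlgebra.norm_ringInverse_mul_lt_one hd hd₂, CStarAlgebra.norm_mul_ringInverse_lt_one hd hd₁,
    CStarAlgebra.norm_mul_ringInverse_lt_one ha ha₁⟩
end
end

section
/- Let T be a J-unitary operator on K, let λ be a complex number with |λ| = 1, and let φ, ψ ∈ K satisfy Tφ = λφ and Tψ = λψ + φ. Then ⟨φ, Jφ⟩ = 0. -/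
noncomputable section

open ContinuousLinearMap

variable {H : Type*} [NormedAddCommGroup H] [InnerProductSpace ℂ H] [CompleteSpace H]
  [TopologicalSpace.SeparableSpace H]

local notation "K" => WithLp 2 (H × H)

/-
Pairing the chain vector `ψ` with the eigenvector `φ` in the invariant form `B x y = ⟪x, J y⟫`
gives `B ψ φ = B (Tψ) (Tφ) = |λ|² B ψ φ + λ B φ φ`, so `λ B φ φ = 0` with `λ` invertible.
-/

theorem LinearMap.apply_self_eq_zero_of_jordan_chain {R M : Type*} [CommRing R] [StarRing R]
    [AddCommGroup M] [Module R M] {B : M →ₗ⋆[R] M →ₗ[R] R} {T : M →ₗ[R] M}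
    (hB : ∀ x y, B (T x) (T y) = B x y) {lam : R} (hlam : star lam * lam = 1) {φ ψ : M}
    (hφ : T φ = lam • φ) (hψ : T ψ = lam • ψ + φ) : B φ φ = 0 := by
  have hcancel : lam * B φ φ = 0 := by
    have h := hB ψ φ
    rw [hφ, hψ, map_add, LinearMap.add_apply, map_smulₛₗ₂, map_smul, map_smul, smul_eq_mul,
      smul_eq_mul, smul_eq_mul, starRingEnd_apply, ← mul_assoc, hlam, one_mul] at h
    linear_combination h
  exact (IsUnit.of_mul_eq_one_right _ hlam).mul_right_eq_zero.mp hcancel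

namespace ContinuousLinearMap

variable {𝕜 E : Type*} [RCLike 𝕜] [NormedAddCommGroup E] [InnerProductSpace 𝕜 E] [CompleteSpace E]
  {T J : E →L[𝕜] E}

theorem inner_map_map_of_adjoint_mul_mul_eq (hTJ : adjoint T * J * T = J) (x y : E) :
    inner 𝕜 (T x) (J (T y)) = inner 𝕜 x (J y) := by
  rw [← adjoint_inner_right]
  exact congrArg (inner 𝕜 x) (DFunLike.congr_fun hTJ y)

theorem inner_apply_self_eq_zero_of_jordan_chain (hTJ : adjoint T * J * T = J) {lam : 𝕜}
    (hlam : ‖lam‖ = 1) {φ ψ : E} (hφ : T φ = lam • φ) (hψ : T ψ = lam • ψ + φ) :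
    inner 𝕜 φ (J φ) = 0 := by
  have hlam' : star lam * lam = 1 := by
    rw [← starRingEnd_apply, RCLike.conj_mul, hlam]
    norm_num
  exact LinearMap.apply_self_eq_zero_of_jordan_chain (B := (innerₛₗ 𝕜).compl₂ (J : E →ₗ[𝕜] E))
    (T := T) (inner_map_map_of_adjoint_mul_mul_eq hTJ) hlam' hφ hψ

end ContinuousLinearMap

/-- from the proof of Proposition 3.12 / Corollary 3.13 of the paper:
if `λ` is a unit eigenvalue of a `J`-unitary `T` with a nontrivial Jordan chain
`Tφ = λφ`, `Tψ = λψ + φ`, then the eigenvector `φ` is `J`-isotropic: `⟪φ, Jφ⟫ = 0`. -/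
theorem jordan_chain_isotropic_eigenvector (T : K →L[ℂ] K) (hT : IsJUnitary T)
    (lam : ℂ) (hlam : ‖lam‖ = 1) (φ ψ : K)
    (hφ : T φ = lam • φ) (hψ : T ψ = lam • ψ + φ) :
    (inner ℂ φ ((fundJ : K →L[ℂ] K) φ) : ℂ) = 0 :=
  inner_apply_self_eq_zero_of_jordan_chain (by rw [← star_eq_adjoint, hT.2]) hlam hφ hψ
end
end

section
/- Let T be a J-unitary operator on K and let z be a complex number with |z| = 1 such that T − z·1 is a Fredholm operator. Then the Fredholm index of T − z·1 vanishes, i.e. dim ker(T − z·1) = dim ker((T − z·1)*). -/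
noncomputable section

open ContinuousLinearMap

variable {H : Type*} [NormedAddCommGroup H] [InnerProductSpace ℂ H] [CompleteSpace H]
  [TopologicalSpace.SeparableSpace H]

local notation "K" => WithLp 2 (H × H)

/-- A bounded operator on a Hilbert space is Fredholm: finite-dimensional kernel,
closed range, and finite-dimensional orthogonal complement of the range. -/
def IsFredholmOp (A : K →L[ℂ] K) : Prop :=
  FiniteDimensional ℂ (LinearMap.ker (A : K →ₗ[ℂ] K)) ∧ IsClosed (Set.range A : Set K) ∧
    FiniteDimensional ℂ ↥((LinearMap.range (A : K →ₗ[ℂ] K))ᗮ)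

/-! For a `J`-unitary `T`, `T* = J T⁻¹ J`, and on the unit circle this becomes
`(T - z)* = -z̄ J T⁻¹ (T - z) J`. So `(T - z)*` is `T - z` multiplied by invertible operators on
both sides, and its kernel is the image of `ker (T - z)` under `J`. -/

open Module

theorem LinearMap.finrank_ker_equiv_comp_comp {R M M' N N' : Type*} [Ring R]
    [AddCommGroup M] [Module R M] [AddCommGroup M'] [Module R M']
    [AddCommGroup N] [Module R N] [AddCommGroup N'] [Module R N']
    (e : N ≃ₗ[R] N') (f : M →ₗ[R] N) (e' : M' ≃ₗ[R] M) :
    finrank R (ker ((e : N →ₗ[R] N') ∘ₗ f ∘ₗ (e' : M' →ₗ[R] M))) = finrank R (ker f) := by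
  rw [LinearEquiv.ker_comp, LinearMap.ker_comp, Submodule.comap_equiv_eq_map_symm,
    LinearEquiv.finrank_map_eq]

theorem ContinuousLinearMap.finrank_ker_mul_mul_of_isUnit {𝕜 E : Type*} [Ring 𝕜]
    [TopologicalSpace E] [AddCommGroup E] [Module 𝕜 E] {U V : E →L[𝕜] E}
    (hU : IsUnit U) (hV : IsUnit V) (S : E →L[𝕜] E) :
    finrank 𝕜 (LinearMap.ker ((U * S * V : E →L[𝕜] E) : E →ₗ[𝕜] E))
      = finrank 𝕜 (LinearMap.ker (S : E →ₗ[𝕜] E)) := by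
  obtain ⟨U, rfl⟩ := hU
  obtain ⟨V, rfl⟩ := hV
  exact LinearMap.finrank_ker_equiv_comp_comp
    (ContinuousLinearEquiv.unitsEquiv 𝕜 E U).toLinearEquiv (S : E →ₗ[𝕜] E)
    (ContinuousLinearEquiv.unitsEquiv 𝕜 E V).toLinearEquiv

theorem Units.star_eq_mul_inv_mul_of_star_mul_mul_eq {R : Type*} [Monoid R] [StarMul R]
    {J : R} (hJ : J * J = 1) (u : Rˣ) (h : star (u : R) * J * u = J) :
    star (u : R) = J * ↑u⁻¹ * J := by
  calc star (u : R) = star (u : R) * J * u * ↑u⁻¹ * J := by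
        simp only [mul_assoc, Units.mul_inv_cancel_left, hJ, mul_one]
    _ = J * ↑u⁻¹ * J := by rw [h]

theorem Units.star_sub_smul_one_of_star_mul_mul_eq {𝕜 R : Type*} [CommRing 𝕜] [StarRing 𝕜]
    [Ring R] [StarRing R] [Algebra 𝕜 R] [StarModule 𝕜 R] {J : R} (hJ : J * J = 1) (u : Rˣ)
    (h : star (u : R) * J * u = J) {z : 𝕜} (hz : star z * z = 1) :
    star ((u : R) - z • 1) = (-star z) • (J * ↑u⁻¹) * ((u : R) - z • 1) * J := by
  rw [star_sub, star_smul, star_one, Units.star_eq_mul_inv_mul_of_star_mul_mul_eq hJ u h]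
  have hJuJ : J * ↑u⁻¹ * ((u : R) - z • 1) * J = 1 - z • (J * ↑u⁻¹ * J) := by
    simp only [mul_sub, sub_mul, Units.inv_mul_cancel_right, hJ, mul_smul_comm, smul_mul_assoc,
      mul_one]
  rw [smul_mul_assoc, smul_mul_assoc, hJuJ, smul_sub, smul_smul, neg_mul, hz]
  module

theorem jUnitary_fredholm_index_zero_general (T : K →L[ℂ] K) (hT : IsJUnitary T)
    (z : ℂ) (hz : ‖z‖ = 1) :
    Module.finrank ℂ (LinearMap.ker ((T - z • (1 : K →L[ℂ] K)) : K →ₗ[ℂ] K))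
      = Module.finrank ℂ (LinearMap.ker ((star (T - z • (1 : K →L[ℂ] K)) : K →L[ℂ] K) : K →ₗ[ℂ] K)) := by
  obtain ⟨⟨u, rfl⟩, hJu⟩ := hT
  have hJJ : fundJ * fundJ = (1 : K →L[ℂ] K) := by
    ext x
    simp [fundJ, blk]
    rfl
  have hJ_unit : IsUnit (fundJ : K →L[ℂ] K) := ⟨⟨fundJ, fundJ, hJJ, hJJ⟩, rfl⟩
  have hzz : star z * z = 1 := by
    rw [RCLike.star_def, RCLike.conj_mul, hz]
    norm_num
  have hz_ne : -star z ≠ 0 := neg_ne_zero.mpr (left_ne_zero_of_mul_eq_one hzz)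
  rw [Units.star_sub_smul_one_of_star_mul_mul_eq hJJ u hJu hzz,
    ContinuousLinearMap.finrank_ker_mul_mul_of_isUnit _ hJ_unit]
  · rfl
  · exact IsUnit.smul hz_ne.isUnit.unit (hJ_unit.mul u⁻¹.isUnit)

/-- Proposition 4.2 (ii) of the paper: if `T` is `J`-unitary and
`T − z·1` is Fredholm for some `z` on the unit circle, then the Fredholm index of
`T − z·1` vanishes: `dim ker(T − z) = dim ker((T − z)*)`. -/
theorem jUnitary_fredholm_index_zero (T : K →L[ℂ] K) (hT : IsJUnitary T)
    (z : ℂ) (hz : ‖z‖ = 1) (hF : IsFredholmOp (T - z • (1 : K →L[ℂ] K))) :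
    Module.finrank ℂ (LinearMap.ker ((T - z • (1 : K →L[ℂ] K)) : K →ₗ[ℂ] K))
      = Module.finrank ℂ (LinearMap.ker ((star (T - z • (1 : K →L[ℂ] K)) : K →L[ℂ] K) : K →ₗ[ℂ] K)) :=
  jUnitary_fredholm_index_zero_general T hT z hz
end
end

section
/- Let H be a bounded self-adjoint operator on a complex Hilbert space and for E ∈ ℝ set V^E = (1 − i(H − E·1))(1 + i(H − E·1))^{-1}. Then: (i) V^E is unitary; (ii) ker(V^E − 1) = ker(H − E·1); (iii) the map E ↦ V^E is differentiable in operator norm with (1/i)(V^E)* (d/dE)V^E = 2(1 + (H − E·1)²)^{-1}, which is a positive operator bounded below by 2/(1 + ‖H − E·1‖²) times the identity; and (iv) ‖V^E + 1‖ → 0 as |E| → ∞. -/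
/-!
With `A = H₀ − e`, `V e` is the Cayley transform `(1 − iA)(1 + iA)⁻¹` of a self-adjoint element.
Since the spectrum of `A` is real, `1 ± iA` are invertible, commute, are adjoint to each other and
multiply to `1 + A²`; unitarity, `V e − 1 = (1 + iA)⁻¹(−2iA)` and
`(V e)* (1 + iA)⁻² = (1 − iA)⁻¹(1 + iA)⁻¹ = (1 + A²)⁻¹` are then algebra.
Writing `1 + iA = −i((e + i) − H₀)` gives `V e = 2i R(e + i) − 1` with `R` the resolvent of `H₀`,
so the derivative is `−2i R(e + i)² = 2i (1 + iA)⁻²` and `‖V e + 1‖ = 2‖R(e + i)‖ → 0`.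
The lower bound is `Re ⟪(1 + A²)ψ, ψ⟫ = ‖ψ‖² + ‖Aψ‖² ≥ ‖(1 + A²)ψ‖² / (1 + ‖A‖²)`,
by Cauchy–Schwarz in `ℝ²` applied to `‖(1 + A²)ψ‖ ≤ ‖ψ‖ + ‖A‖‖Aψ‖`.
-/

open Complex Filter Topology
open scoped Ring InnerProductSpace

section Inverse

lemma Commute.ringInverse_right_of_isUnit {M₀ : Type*} [MonoidWithZero M₀] {x y : M₀}
    (h : Commute x y) (hy : IsUnit y) : Commute x y⁻¹ʳ := by
  rw [← hy.unit_spec] at h ⊢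
  rw [Ring.inverse_unit]
  exact h.units_inv_right

lemma Ring.inverse_smul {𝕜 𝒜 : Type*} [Field 𝕜] [Ring 𝒜] [Algebra 𝕜 𝒜] {c : 𝕜} (hc : c ≠ 0)
    (x : 𝒜) : (c • x)⁻¹ʳ = c⁻¹ • x⁻¹ʳ := by
  have hunit : IsUnit (c • x) ↔ IsUnit x := isUnit_smul_iff (Units.mk0 c hc) x
  by_cases hx : IsUnit x
  · calc (c • x)⁻¹ʳ = (c • x)⁻¹ʳ * ((c • x) * (c⁻¹ • x⁻¹ʳ)) := by
          rw [smul_mul_smul_comm, mul_inv_cancel₀ hc, Ring.mul_inverse_cancel _ hx, one_smul,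
            mul_one]
      _ = c⁻¹ • x⁻¹ʳ := Ring.inverse_mul_cancel_left _ _ (hunit.mpr hx)
  · rw [Ring.inverse_non_unit _ hx, Ring.inverse_non_unit _ (hunit.not.mpr hx), smul_zero]

end Inverse

section Algebra

variable {𝒜 : Type*} [Ring 𝒜] [Algebra ℂ 𝒜] {b : 𝒜}

noncomputable def cayley (b : 𝒜) : 𝒜 := (1 - I • b) * (1 + I • b)⁻¹ʳ

lemma one_add_I_smul_mul_one_sub_I_smul (b : 𝒜) : (1 + I • b) * (1 - I • b) = 1 + b ^ 2 := by
  simp only [add_mul, mul_sub, one_mul, mul_one, smul_mul_smul_comm, I_mul_I, sq]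
  module

lemma commute_one_add_I_smul_one_sub_I_smul (b : 𝒜) : Commute (1 + I • b) (1 - I • b) :=
  (Commute.one_left _).add_left ((Commute.one_right _).sub_right (.refl _))

lemma cayley_eq_inverse_mul (hu : IsUnit (1 + I • b)) :
    cayley b = (1 + I • b)⁻¹ʳ * (1 - I • b) :=
  ((commute_one_add_I_smul_one_sub_I_smul b).symm.ringInverse_right_of_isUnit hu).eq

lemma cayley_eq_two_smul_inverse_sub_one (hu : IsUnit (1 + I • b)) :
    cayley b = (2 : ℂ) • (1 + I • b)⁻¹ʳ - 1 := by
  rw [cayley, show 1 - I • b = (2 : ℂ) • (1 : 𝒜) - (1 + I • b) by module, sub_mul, smul_one_mul,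
    Ring.mul_inverse_cancel _ hu]

lemma cayley_sub_one (hu : IsUnit (1 + I • b)) :
    cayley b - 1 = (1 + I • b)⁻¹ʳ * ((-2 * I) • b) := by
  rw [cayley_eq_inverse_mul hu, show (-2 * I) • b = (1 - I • b) - (1 + I • b) by module,
    mul_sub _ (1 - I • b), Ring.inverse_mul_cancel _ hu]

lemma one_add_I_smul_eq_smul_algebraMap_sub (b : 𝒜) :
    1 + I • b = (-I) • (algebraMap ℂ 𝒜 I - b) := by
  rw [Algebra.algebraMap_eq_smul_one, smul_sub (-I), smul_smul, neg_mul, I_mul_I]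
  module

lemma isUnit_one_add_I_smul_of_mem_resolventSet (h : I ∈ resolventSet ℂ b) :
    IsUnit (1 + I • b) := by
  rw [one_add_I_smul_eq_smul_algebraMap_sub]
  exact (isUnit_smul_iff (Units.mk0 (-I) (neg_ne_zero.mpr I_ne_zero)) _).mpr h

lemma inverse_one_add_I_smul (b : 𝒜) : (1 + I • b)⁻¹ʳ = I • resolvent b I := by
  rw [one_add_I_smul_eq_smul_algebraMap_sub, Ring.inverse_smul (neg_ne_zero.mpr I_ne_zero),
    inv_neg, inv_I, neg_neg, resolvent]

lemma resolvent_sub_smul_one (b : 𝒜) (z w : ℂ) : resolvent (b - z • 1) w = resolvent b (z + w) := by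
  rw [resolvent, resolvent, Algebra.algebraMap_eq_smul_one, Algebra.algebraMap_eq_smul_one,
    add_smul, sub_sub_eq_add_sub, add_comm (z • (1 : 𝒜))]

end Algebra

section StarAlgebra

variable {𝒜 : Type*} [Ring 𝒜] [StarRing 𝒜] [Algebra ℂ 𝒜] [StarModule ℂ 𝒜] {b : 𝒜}

lemma IsSelfAdjoint.star_one_add_I_smul (hb : IsSelfAdjoint b) : star (1 + I • b) = 1 - I • b := by
  simp [star_smul, hb.star_eq, sub_eq_add_neg]

lemma IsSelfAdjoint.star_one_sub_I_smul (hb : IsSelfAdjoint b) : star (1 - I • b) = 1 + I • b := by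
  rw [← hb.star_one_add_I_smul, star_star]

lemma IsSelfAdjoint.star_cayley (hb : IsSelfAdjoint b) :
    star (cayley b) = (1 - I • b)⁻¹ʳ * (1 + I • b) := by
  rw [cayley, star_mul, ← Ring.inverse_star, hb.star_one_add_I_smul, hb.star_one_sub_I_smul]

lemma IsSelfAdjoint.cayley_mem_unitary (hb : IsSelfAdjoint b) (hu : IsUnit (1 + I • b)) :
    cayley b ∈ unitary 𝒜 := by
  have hv : IsUnit (1 - I • b) := hb.star_one_add_I_smul ▸ hu.star
  have hcomm : Commute (1 + I • b) (1 - I • b)⁻¹ʳ :=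
    (commute_one_add_I_smul_one_sub_I_smul b).ringInverse_right_of_isUnit hv
  rw [Unitary.mem_iff, hb.star_cayley]
  constructor
  · rw [cayley_eq_inverse_mul hu, mul_assoc, Ring.mul_inverse_cancel_left _ _ hu,
      Ring.inverse_mul_cancel _ hv]
  · rw [cayley, ← hcomm.eq, mul_assoc, Ring.inverse_mul_cancel_left _ _ hu,
      Ring.mul_inverse_cancel _ hv]

lemma IsSelfAdjoint.star_cayley_mul_inverse_sq (hb : IsSelfAdjoint b) (hu : IsUnit (1 + I • b)) :
    star (cayley b) * (1 + I • b)⁻¹ʳ ^ 2 = (1 + b ^ 2)⁻¹ʳ := by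
  rw [hb.star_cayley, sq, mul_assoc, Ring.mul_inverse_cancel_left _ _ hu,
    ← one_add_I_smul_mul_one_sub_I_smul,
    Ring.mul_inverse_rev' (commute_one_add_I_smul_one_sub_I_smul b)]

end StarAlgebra

section CStarAlgebra

variable {𝒜 : Type*} [CStarAlgebra 𝒜] {b : 𝒜}

lemma IsSelfAdjoint.mem_resolventSet_of_im_ne_zero (hb : IsSelfAdjoint b) {z : ℂ}
    (hz : z.im ≠ 0) : z ∈ resolventSet ℂ b := by
  by_contra h
  exact hz (by rw [hb.mem_spectrum_eq_re h, ofReal_im])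

lemma IsSelfAdjoint.isUnit_one_add_I_smul (hb : IsSelfAdjoint b) : IsUnit (1 + I • b) :=
  isUnit_one_add_I_smul_of_mem_resolventSet (hb.mem_resolventSet_of_im_ne_zero (by simp))

lemma IsSelfAdjoint.isUnit_one_add_sq (hb : IsSelfAdjoint b) : IsUnit (1 + b ^ 2) := by
  rw [← one_add_I_smul_mul_one_sub_I_smul]
  exact hb.isUnit_one_add_I_smul.mul (hb.star_one_add_I_smul ▸ hb.isUnit_one_add_I_smul.star)

lemma IsSelfAdjoint.sub_ofReal_smul_one (hb : IsSelfAdjoint b) (t : ℝ) :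
    IsSelfAdjoint (b - (t : ℂ) • 1) :=
  hb.sub (IsSelfAdjoint.smul (conj_ofReal t) (.one 𝒜))

lemma IsSelfAdjoint.cayley_sub_ofReal_smul_one (hb : IsSelfAdjoint b) (t : ℝ) :
    cayley (b - (t : ℂ) • 1) = (2 * I) • resolvent b (t + I) - 1 := by
  rw [cayley_eq_two_smul_inverse_sub_one (hb.sub_ofReal_smul_one t).isUnit_one_add_I_smul,
    inverse_one_add_I_smul, resolvent_sub_smul_one, smul_smul]

lemma IsSelfAdjoint.hasDerivAt_cayley_sub_ofReal_smul_one (hb : IsSelfAdjoint b) (t : ℝ) :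
    HasDerivAt (fun s : ℝ => cayley (b - (s : ℂ) • 1))
      ((2 * I) • (1 + I • (b - (t : ℂ) • 1))⁻¹ʳ ^ 2) t := by
  have hR : HasDerivAt (resolvent b) (-resolvent b (t + I) ^ 2) (t + I) :=
    spectrum.hasDerivAt_resolvent_const_left (hb.mem_resolventSet_of_im_ne_zero (by simp))
  have hpath : HasDerivAt (fun s : ℝ => (s : ℂ) + I) 1 t :=
    (ofRealCLM.hasDerivAt).add_const I
  have := ((hR.scomp t hpath).const_smul (2 * I)).sub_const 1
  simp only [hb.cayley_sub_ofReal_smul_one]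
  refine this.congr_deriv ?_
  rw [inverse_one_add_I_smul, resolvent_sub_smul_one, smul_pow, I_sq, one_smul, neg_one_smul]

lemma IsSelfAdjoint.tendsto_norm_cayley_sub_ofReal_smul_one_add_one (hb : IsSelfAdjoint b) :
    Tendsto (fun t : ℝ => ‖cayley (b - (t : ℂ) • 1) + 1‖) (atTop ⊔ atBot) (𝓝 0) := by
  have hpath : Tendsto (fun t : ℝ => (t : ℂ) + I) (atTop ⊔ atBot) (Bornology.cobounded ℂ) :=
    (tendsto_add_const_cobounded I).comp
      (tendsto_sup.mpr ⟨RCLike.tendsto_ofReal_atTop_cobounded ℂ,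
        RCLike.tendsto_ofReal_atBot_cobounded ℂ⟩)
  have := (((spectrum.resolvent_tendsto_cobounded b).comp hpath).const_smul (2 * I)).norm
  simp only [hb.cayley_sub_ofReal_smul_one, sub_add_cancel]
  simpa using this

end CStarAlgebra

section Operator

variable {E : Type*} [NormedAddCommGroup E]

lemma ker_cayley_sub_one [NormedSpace ℂ E] {b : E →L[ℂ] E} (hu : IsUnit (1 + I • b)) :
    LinearMap.ker ((cayley b - 1 : E →L[ℂ] E) : E →ₗ[ℂ] E) = LinearMap.ker (b : E →ₗ[ℂ] E) := by
  have hinj : ∀ y, (1 + I • b)⁻¹ʳ y = 0 ↔ y = 0 := fun y =>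
    ⟨fun h => by simpa [h] using congr($(Ring.mul_inverse_cancel _ hu) y).symm,
      fun h => by rw [h, map_zero]⟩
  ext x
  simp [cayley_sub_one hu, hinj, I_ne_zero]

variable [InnerProductSpace ℂ E] {A : E →L[ℂ] E}

lemma norm_one_add_sq_apply_sq_le (A : E →L[ℂ] E) (ψ : E) :
    ‖(1 + A ^ 2 : E →L[ℂ] E) ψ‖ ^ 2 ≤ (1 + ‖A‖ ^ 2) * (‖ψ‖ ^ 2 + ‖A ψ‖ ^ 2) := by
  have h : ‖(1 + A ^ 2 : E →L[ℂ] E) ψ‖ ≤ ‖ψ‖ + ‖A‖ * ‖A ψ‖ := by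
    calc ‖(1 + A ^ 2 : E →L[ℂ] E) ψ‖ = ‖ψ + A (A ψ)‖ := rfl
      _ ≤ ‖ψ‖ + ‖A‖ * ‖A ψ‖ := (norm_add_le _ _).trans (by gcongr; exact A.le_opNorm _)
  nlinarith [sq_nonneg (‖A‖ * ‖ψ‖ - ‖A ψ‖), norm_nonneg ((1 + A ^ 2 : E →L[ℂ] E) ψ)]

variable [CompleteSpace E]

lemma IsSelfAdjoint.re_inner_one_add_sq_apply_self (hA : IsSelfAdjoint A) (ψ : E) :
    re ⟪(1 + A ^ 2 : E →L[ℂ] E) ψ, ψ⟫_ℂ = ‖ψ‖ ^ 2 + ‖A ψ‖ ^ 2 := by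
  have hsymm : ⟪A (A ψ), ψ⟫_ℂ = ⟪A ψ, A ψ⟫_ℂ := hA.isSymmetric (A ψ) ψ
  rw [add_apply, one_apply_eq_self, sq, mul_apply_eq_comp, inner_add_left, add_re, hsymm]
  exact congr($(inner_self_eq_norm_sq (𝕜 := ℂ) ψ) + $(inner_self_eq_norm_sq (𝕜 := ℂ) (A ψ)))

lemma IsSelfAdjoint.inv_one_add_norm_sq_mul_norm_sq_le_re_inner_inverse
    (hA : IsSelfAdjoint A) (φ : E) :
    (1 + ‖A‖ ^ 2)⁻¹ * ‖φ‖ ^ 2 ≤ re ⟪φ, (1 + A ^ 2 : E →L[ℂ] E)⁻¹ʳ φ⟫_ℂ := by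
  obtain ⟨ψ, rfl⟩ : ∃ ψ, (1 + A ^ 2 : E →L[ℂ] E) ψ = φ :=
    ⟨(1 + A ^ 2 : E →L[ℂ] E)⁻¹ʳ φ, by
      rw [← mul_apply_eq_comp, Ring.mul_inverse_cancel _ hA.isUnit_one_add_sq,
        one_apply_eq_self]⟩
  rw [← mul_apply_eq_comp, Ring.inverse_mul_cancel _ hA.isUnit_one_add_sq, one_apply_eq_self,
    hA.re_inner_one_add_sq_apply_self, inv_mul_le_iff₀ (by positivity)]
  exact norm_one_add_sq_apply_sq_le A ψ

end Operator

/-- Proposition 6.3 of the paper: for a bounded self-adjoint operator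
`H₀` and `V^E = (1 − i(H₀ − E))(1 + i(H₀ − E))⁻¹`, each `V^E` is unitary, its fixed
vectors are exactly the eigenvectors of `H₀` for the eigenvalue `E`, the path `E ↦ V^E`
is differentiable with `(1/i)(V^E)* (d/dE)V^E = 2(1 + (H₀ − E)²)⁻¹ ≥ 2/(1+‖H₀−E‖²)·1`,
and `V^E → −1` in norm as `|E| → ∞`. -/
theorem bound_states_unitary_path
    {E : Type*} [NormedAddCommGroup E] [InnerProductSpace ℂ E] [CompleteSpace E]
    (H₀ : E →L[ℂ] E) (hsa : IsSelfAdjoint H₀)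
    (V : ℝ → (E →L[ℂ] E))
    (hV : ∀ e : ℝ, V e =
      (1 - Complex.I • (H₀ - (e : ℂ) • (1 : E →L[ℂ] E))) *
        Ring.inverse (1 + Complex.I • (H₀ - (e : ℂ) • (1 : E →L[ℂ] E)))) :
    -- (i) each V^E is unitary
    (∀ e : ℝ, V e ∈ unitary (E →L[ℂ] E)) ∧
    -- (ii) ker(V^E − 1) = ker(H₀ − E·1)
    (∀ e : ℝ, LinearMap.ker ((V e - (1 : E →L[ℂ] E) : E →L[ℂ] E) : E →ₗ[ℂ] E)
      = LinearMap.ker ((H₀ - (e : ℂ) • (1 : E →L[ℂ] E) : E →L[ℂ] E) : E →ₗ[ℂ] E)) ∧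
    -- (iii) differentiability and the derivative formula, with the lower bound
    (∀ e : ℝ, ∃ D : E →L[ℂ] E,
      HasDerivAt V D e ∧
      (-Complex.I) • (star (V e) * D)
        = (2 : ℂ) • Ring.inverse (1 + (H₀ - (e : ℂ) • (1 : E →L[ℂ] E)) ^ 2) ∧
      ∀ φ : E,
        2 / (1 + ‖H₀ - (e : ℂ) • (1 : E →L[ℂ] E)‖ ^ 2) * ‖φ‖ ^ 2 ≤
          (inner ℂ φ (((-Complex.I) • (star (V e) * D)) φ) : ℂ).re) ∧
    -- (iv) ‖V^E + 1‖ → 0 as |E| → ∞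
    Filter.Tendsto (fun e : ℝ => ‖V e + 1‖) (Filter.atTop ⊔ Filter.atBot)
      (nhds 0) := by
  obtain rfl : V = fun e : ℝ => cayley (H₀ - (e : ℂ) • 1) := funext hV
  have hA (e : ℝ) := hsa.sub_ofReal_smul_one e
  refine ⟨fun e => (hA e).cayley_mem_unitary (hA e).isUnit_one_add_I_smul,
    fun e => ker_cayley_sub_one (hA e).isUnit_one_add_I_smul, fun e => ?_,
    hsa.tendsto_norm_cayley_sub_ofReal_smul_one_add_one⟩
  have hD : (-I) • (star (cayley (H₀ - (e : ℂ) • 1)) *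
      (2 * I) • (1 + I • (H₀ - (e : ℂ) • 1))⁻¹ʳ ^ 2) =
      (2 : ℂ) • (1 + (H₀ - (e : ℂ) • 1) ^ 2)⁻¹ʳ := by
    rw [mul_smul_comm, smul_smul, (hA e).star_cayley_mul_inverse_sq (hA e).isUnit_one_add_I_smul]
    congr 1
    linear_combination (-2) * I_sq
  refine ⟨_, hsa.hasDerivAt_cayley_sub_ofReal_smul_one e, hD, fun φ => ?_⟩
  rw [hD, smul_apply, inner_smul_right, mul_re, re_ofNat, im_ofNat, zero_mul, sub_zero,
    div_eq_mul_inv, mul_assoc]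
  gcongr
  exact (hA e).inv_one_add_norm_sq_mul_norm_sq_le_re_inner_inverse φ
end

section
/- Let T and S be bounded operators on a separable complex Hilbert space such that T − S is compact, and let C be a connected component of ℂ \ σ(T). Then one of the following holds: (i) C contains a point of the resolvent set of S, and in this case σ(S) ∩ C is a discrete subset of C, i.e. it has no accumulation point in C; or (ii) every point of C is an eigenvalue of S. -/
/-!
Write `A z = R(T, z) (S - T)` for the resolvent `R(T, z)` of `T`, an analytic family of compact
operators on `ℂ \ σ(T)` with `z - S = (z - T) (1 - A z)`; so `z ∈ σ(S)` iff `1 - A z` is not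
invertible. Near any point, approximate `A` by a fixed finite-rank operator `F` up to norm `< 1`;
then `1 - A z` is a Neumann-series unit times `1 - (1 - (A z - F))⁻¹ F`, and the invertibility of
the latter is decided by a finite determinant `d z`, analytic in `z`. By the isolated zeros of
`d`, locally either `σ(S)` contains a neighbourhood or it misses a punctured neighbourhood; both
alternatives are open conditions, so one of them holds on all of the connected component `C`.
In the first case the Fredholm alternative for the compact operator `A z` turns `z ∈ σ(S)` into
an eigenvector of `S`.
-/

open Filter Topology Metric Set

theorem IsCompactOperator.isUnit_one_sub_iff {𝕜 E : Type*} [NontriviallyNormedField 𝕜]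
    [NormedAddCommGroup E] [NormedSpace 𝕜 E] [CompleteSpace E] {T : E →L[𝕜] E}
    (hT : IsCompactOperator T) : IsUnit (1 - T) ↔ ∀ x, T x = x → x = 0 := by
  constructor
  · intro hu x hx
    refine (ContinuousLinearMap.isUnit_iff_bijective.mp hu).1 ?_
    simp [hx]
  · intro h
    have h1 := (hT.hasEigenvalue_or_mem_resolventSet one_ne_zero).resolve_left fun hev => by
      obtain ⟨x, hx⟩ := hev.exists_hasEigenvector
      rw [Module.End.hasEigenvector_iff, Module.End.mem_eigenspace_iff, one_smul] at hx
      exact hx.2 (h x hx.1)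
    simpa using spectrum.mem_resolventSet_iff.mp h1

namespace ContinuousLinearMap

open Matrix

variable {𝕜 E ι : Type*} [NontriviallyNormedField 𝕜] [NormedAddCommGroup E] [NormedSpace 𝕜 E]
  [Fintype ι] (α : ι → StrongDual 𝕜 E) (v : ι → E)

theorem isCompactOperator_sum_smulRight [LocallyCompactSpace 𝕜] :
    IsCompactOperator ⇑(∑ i, (α i).smulRight (v i) : E →L[𝕜] E) := by
  have hmem : ∀ i, (α i).smulRight (v i) ∈ compactOperator (RingHom.id 𝕜) E E := fun i =>
    (isCompactOperator_of_locallyCompactSpace_dom (α i)).continuous_comp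
      (continuous_id.smul continuous_const)
  exact Submodule.sum_mem _ fun i _ => hmem i

theorem apply_sum_smul_eq_mulVec (β : ι → 𝕜) (i : ι) :
    α i (∑ j, β j • v j) = (Matrix.of (fun i j => α i (v j)) *ᵥ β) i := by
  simp [mulVec, dotProduct, mul_comm]

theorem mul_sum_smulRight (L : E →L[𝕜] E) :
    L * ∑ i, (α i).smulRight (v i) = ∑ i, (α i).smulRight (L (v i)) := by
  ext x
  simp

variable [DecidableEq ι]

theorem exists_ne_zero_sum_smulRight_apply_eq_self_iff :
    (∃ x ≠ 0, (∑ i, (α i).smulRight (v i)) x = x) ↔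
      (1 - Matrix.of fun i j => α i (v j)).det = 0 := by
  rw [← exists_mulVec_eq_zero_iff]
  simp only [FunLike.coe_sum, Finset.sum_apply, smulRight_apply, sub_mulVec, one_mulVec,
    sub_eq_zero]
  constructor
  · rintro ⟨x, hx0, hx⟩
    refine ⟨fun i => α i x, fun h => hx0 ?_, ?_⟩
    · rw [← hx]
      simp [congrFun h]
    · ext i
      conv_lhs => rw [← hx]
      exact apply_sum_smul_eq_mulVec α v _ i
  · rintro ⟨β, hβ0, hβ⟩
    have hαx : (fun i => α i (∑ j, β j • v j)) = β := by
      ext i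
      rw [apply_sum_smul_eq_mulVec, ← hβ]
    refine ⟨∑ j, β j • v j, fun h => hβ0 ?_, ?_⟩
    · rw [← hαx, h]
      exact funext fun i => map_zero (α i)
    · exact Finset.sum_congr rfl fun i _ => by rw [congrFun hαx i]

theorem isUnit_one_sub_sum_smulRight_iff [CompleteSpace E] [LocallyCompactSpace 𝕜] :
    IsUnit (1 - ∑ i, (α i).smulRight (v i)) ↔ (1 - Matrix.of fun i j => α i (v j)).det ≠ 0 := by
  rw [(isCompactOperator_sum_smulRight α v).isUnit_one_sub_iff, ne_eq,
    ← exists_ne_zero_sum_smulRight_apply_eq_self_iff]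
  simp only [not_exists, not_and]
  exact forall_congr' fun x => by tauto

theorem isUnit_one_sub_iff_det_ne_zero_of_norm_sub_sum_smulRight_lt_one [CompleteSpace E]
    [LocallyCompactSpace 𝕜] {A : E →L[𝕜] E} (hA : ‖A - ∑ i, (α i).smulRight (v i)‖ < 1) :
    IsUnit (1 - A) ↔ (1 - Matrix.of fun i j =>
      α i (Ring.inverse (1 - (A - ∑ i, (α i).smulRight (v i))) (v j))).det ≠ 0 := by
  set F := ∑ i, (α i).smulRight (v i)
  set u := Units.oneSub (A - F) hA
  have hfactor :
      1 - A = u * (1 - ∑ i, (α i).smulRight (Ring.inverse (u : E →L[𝕜] E) (v i))) := by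
    rw [← mul_sum_smulRight, Ring.inverse_unit, mul_sub, Units.mul_inv_cancel_left, mul_one,
      Units.val_oneSub]
    abel
  rw [hfactor, Units.isUnit_units_mul, isUnit_one_sub_sum_smulRight_iff, Units.val_oneSub]

end ContinuousLinearMap

section Approximation

variable {𝕜 E H : Type*} [RCLike 𝕜] [NormedAddCommGroup E] [NormedSpace 𝕜 E]
  [NormedAddCommGroup H] [InnerProductSpace 𝕜 H]

theorem Submodule.norm_sub_starProjection_le {U : Submodule 𝕜 H} [U.HasOrthogonalProjection]
    (y : H) {x : H} (hx : x ∈ U) : ‖y - U.starProjection y‖ ≤ ‖y - x‖ := by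
  rw [starProjection_minimal]
  exact ciInf_le ⟨0, forall_mem_range.mpr fun _ => norm_nonneg _⟩ (⟨x, hx⟩ : U)

theorem IsCompactOperator.exists_finiteDimensional_norm_sub_starProjection_comp_le
    {K : E →L[𝕜] H} (hK : IsCompactOperator K) {ε : ℝ} (hε : 0 < ε) :
    ∃ (W : Submodule 𝕜 H) (_ : FiniteDimensional 𝕜 W), ‖K - W.starProjection ∘L K‖ ≤ ε := by
  obtain ⟨t, htfin, hcov⟩ := totallyBounded_iff.mp
    ((hK.isCompact_closure_image_closedBall 1).totallyBounded.subset subset_closure) ε hε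
  have hW := FiniteDimensional.span_of_finite 𝕜 htfin
  refine ⟨Submodule.span 𝕜 t, hW,
    ContinuousLinearMap.opNorm_le_of_unit_norm hε.le fun x hx => ?_⟩
  obtain ⟨y, hyt, hy⟩ := mem_iUnion₂.mp (hcov ⟨x, by simp [hx], rfl⟩)
  calc ‖K x - (Submodule.span 𝕜 t).starProjection (K x)‖ ≤ ‖K x - y‖ :=
        Submodule.norm_sub_starProjection_le _ (Submodule.subset_span hyt)
    _ ≤ ε := (mem_ball_iff_norm.mp hy).le

theorem Submodule.starProjection_comp_eq_sum_smulRight (W : Submodule 𝕜 H)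
    [FiniteDimensional 𝕜 W] (K : E →L[𝕜] H) :
    W.starProjection ∘L K = ∑ i, ((innerSL 𝕜 (stdOrthonormalBasis 𝕜 W i : H)) ∘L K).smulRight
      (stdOrthonormalBasis 𝕜 W i : H) := by
  ext x
  simp [(stdOrthonormalBasis 𝕜 W).starProjection_eq_sum_rankOne]

theorem IsCompactOperator.exists_sum_smulRight_norm_sub_lt {K : E →L[𝕜] H}
    (hK : IsCompactOperator K) {ε : ℝ} (hε : 0 < ε) :
    ∃ (n : ℕ) (α : Fin n → StrongDual 𝕜 E) (v : Fin n → H),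
      ‖K - ∑ i, (α i).smulRight (v i)‖ < ε := by
  obtain ⟨W, _, hKW⟩ := hK.exists_finiteDimensional_norm_sub_starProjection_comp_le (half_pos hε)
  rw [W.starProjection_comp_eq_sum_smulRight] at hKW
  exact ⟨_, _, _, hKW.trans_lt (half_lt_self hε)⟩

end Approximation

theorem AnalyticAt.matrix_det {𝕜 E R ι : Type*} [NontriviallyNormedField 𝕜]
    [NormedAddCommGroup E] [NormedSpace 𝕜 E] [NormedCommRing R] [NormedAlgebra 𝕜 R] [Fintype ι]
    [DecidableEq ι] {M : E → Matrix ι ι R} {x : E}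
    (hM : ∀ i j, AnalyticAt 𝕜 (fun y => M y i j) x) :
    AnalyticAt 𝕜 (fun y => (M y).det) x := by
  simp only [Matrix.det_apply']
  exact Finset.analyticAt_fun_sum _ fun σ _ =>
    analyticAt_const.mul (Finset.analyticAt_fun_prod _ fun i _ => hM (σ i) i)

theorem AnalyticAt.eventually_not_isUnit_or_eventually_isUnit_one_sub {𝕜 H : Type*} [RCLike 𝕜]
    [NormedAddCommGroup H] [InnerProductSpace 𝕜 H] [CompleteSpace H] {A : 𝕜 → H →L[𝕜] H}
    {z₀ : 𝕜} (hA : AnalyticAt 𝕜 A z₀) (hK : IsCompactOperator (A z₀)) :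
    (∀ᶠ z in 𝓝 z₀, ¬IsUnit (1 - A z)) ∨ ∀ᶠ z in 𝓝[≠] z₀, IsUnit (1 - A z) := by
  obtain ⟨n, α, v, hF⟩ := hK.exists_sum_smulRight_norm_sub_lt one_pos
  set F := ∑ i, (α i).smulRight (v i)
  have hnear : ∀ᶠ z in 𝓝 z₀, ‖A z - F‖ < 1 :=
    (hA.continuousAt.sub continuousAt_const).norm.eventually_lt continuousAt_const hF
  set d := fun z => (1 - Matrix.of fun i j => α i (Ring.inverse (1 - (A z - F)) (v j))).det
  have hd : AnalyticAt 𝕜 d z₀ := by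
    have hinv : AnalyticAt 𝕜 (fun z => Ring.inverse (1 - (A z - F))) z₀ :=
      (analyticOnNhd_inverse _ ⟨Units.oneSub _ hF, Units.val_oneSub _ _⟩).comp
        (f := fun z => 1 - (A z - F)) (analyticAt_const.sub (hA.sub analyticAt_const))
    refine AnalyticAt.matrix_det fun i j => analyticAt_const.sub ?_
    exact ((α i).comp (ContinuousLinearMap.apply 𝕜 H (v j))).analyticAt _ |>.comp hinv
  have hiff : ∀ᶠ z in 𝓝 z₀, IsUnit (1 - A z) ↔ d z ≠ 0 := hnear.mono fun z hz =>
    ContinuousLinearMap.isUnit_one_sub_iff_det_ne_zero_of_norm_sub_sum_smulRight_lt_one α v hz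
  rcases hd.eventually_eq_zero_or_eventually_ne_zero with h | h
  · exact Or.inl <| (h.and hiff).mono fun z hz => by simp [hz.2, hz.1]
  · exact Or.inr <| (h.and (nhdsWithin_le_nhds hiff)).mono fun z hz => hz.2.mpr hz.1

namespace spectrum

variable {R A : Type*} [CommSemiring R] [Ring A] [Algebra R A] {T : A} {z : R}

theorem algebraMap_sub_eq_mul_one_sub_resolvent_mul (hz : z ∈ resolventSet R T) (S : A) :
    algebraMap R A z - S = (algebraMap R A z - T) * (1 - resolvent T z * (S - T)) := by
  rw [mul_sub, mul_one, ← mul_assoc, resolvent, Ring.mul_inverse_cancel _ hz, one_mul]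
  abel

theorem mem_resolventSet_iff_isUnit_one_sub_resolvent_mul (hz : z ∈ resolventSet R T) (S : A) :
    z ∈ resolventSet R S ↔ IsUnit (1 - resolvent T z * (S - T)) := by
  rw [mem_resolventSet_iff, algebraMap_sub_eq_mul_one_sub_resolvent_mul hz,
    ← (mem_resolventSet_iff.mp hz).unit_spec, Units.isUnit_units_mul]

theorem analyticAt_resolvent {𝕜 B : Type*} [NontriviallyNormedField 𝕜] [NormedRing B]
    [NormedAlgebra 𝕜 B] [HasSummableGeomSeries B] {a : B} {z : 𝕜} (hz : z ∈ resolventSet 𝕜 a) :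
    AnalyticAt 𝕜 (resolvent a) z := by
  have hf : AnalyticAt 𝕜 (fun w => algebraMap 𝕜 B w - a) z := by
    simp only [Algebra.algebraMap_eq_smul_one]
    fun_prop
  exact (analyticOnNhd_inverse _ (mem_resolventSet_iff.mp hz)).comp
    (f := fun w => algebraMap 𝕜 B w - a) hf

end spectrum

section CompactPerturbation

variable {𝕜 E : Type*} [NontriviallyNormedField 𝕜] [NormedAddCommGroup E] [NormedSpace 𝕜 E]
  {T S : E →L[𝕜] E}

theorem IsCompactOperator.resolvent_mul_sub (hTS : IsCompactOperator (T - S)) (z : 𝕜) :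
    IsCompactOperator ⇑(resolvent T z * (S - T)) := by
  rw [← neg_sub]
  exact hTS.neg.clm_comp (resolvent T z)

theorem ker_sub_smul_one_ne_bot_of_mem_spectrum [CompleteSpace E]
    (hTS : IsCompactOperator (T - S)) {z : 𝕜} (hzT : z ∈ resolventSet 𝕜 T)
    (hzS : z ∈ spectrum 𝕜 S) : LinearMap.ker ((S - z • 1 : E →L[𝕜] E) : E →ₗ[𝕜] E) ≠ ⊥ := by
  have hnu : ¬IsUnit (1 - resolvent T z * (S - T)) :=
    (spectrum.mem_resolventSet_iff_isUnit_one_sub_resolvent_mul hzT S).not.mp hzS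
  obtain ⟨x, hx, hx0⟩ : ∃ x, (resolvent T z * (S - T)) x = x ∧ x ≠ 0 := by
    simpa [(hTS.resolvent_mul_sub z).isUnit_one_sub_iff] using hnu
  have hxS : (z • 1 - S) x = 0 := by
    rw [← Algebra.algebraMap_eq_smul_one, spectrum.algebraMap_sub_eq_mul_one_sub_resolvent_mul hzT,
      ContinuousLinearMap.mul_def, ContinuousLinearMap.comp_apply]
    simp [hx]
  refine (Submodule.ne_bot_iff _).mpr ⟨x, ?_, hx0⟩
  rw [LinearMap.mem_ker, ContinuousLinearMap.coe_coe, ← neg_sub, neg_apply, hxS, neg_zero]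

end CompactPerturbation

theorem eventually_mem_spectrum_or_eventually_notMem_spectrum {𝕜 H : Type*} [RCLike 𝕜]
    [NormedAddCommGroup H] [InnerProductSpace 𝕜 H] [CompleteSpace H] {T S : H →L[𝕜] H}
    (hTS : IsCompactOperator (T - S)) {z₀ : 𝕜} (hz₀ : z₀ ∈ resolventSet 𝕜 T) :
    (∀ᶠ z in 𝓝 z₀, z ∈ spectrum 𝕜 S) ∨ ∀ᶠ z in 𝓝[≠] z₀, z ∉ spectrum 𝕜 S := by
  have hiff : ∀ᶠ z in 𝓝 z₀, z ∉ spectrum 𝕜 S ↔ IsUnit (1 - resolvent T z * (S - T)) :=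
    ((spectrum.isOpen_resolventSet T).eventually_mem hz₀).mono fun z hz =>
      spectrum.notMem_iff.trans (spectrum.mem_resolventSet_iff_isUnit_one_sub_resolvent_mul hz S)
  have hA : AnalyticAt 𝕜 (fun z => resolvent T z * (S - T)) z₀ :=
    (spectrum.analyticAt_resolvent hz₀).mul analyticAt_const
  rcases hA.eventually_not_isUnit_or_eventually_isUnit_one_sub (hTS.resolvent_mul_sub z₀)
    with h | h
  · exact Or.inl <| (h.and hiff).mono fun z hz => not_not.mp (hz.2.not.mpr hz.1)
  · exact Or.inr <| (h.and (nhdsWithin_le_nhds hiff)).mono fun z hz => hz.2.mpr hz.1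

theorem IsPreconnected.eventually_mem_or_eventually_notMem {X : Type*} [TopologicalSpace X]
    [T1Space X] [∀ x : X, (𝓝[≠] x).NeBot] {C s : Set X} (hC : IsPreconnected C)
    (h : ∀ z ∈ C, (∀ᶠ w in 𝓝 z, w ∈ s) ∨ ∀ᶠ w in 𝓝[≠] z, w ∉ s) :
    (∀ z ∈ C, ∀ᶠ w in 𝓝 z, w ∈ s) ∨ ∀ z ∈ C, ∀ᶠ w in 𝓝[≠] z, w ∉ s := by
  have hdisj : Disjoint {z | ∀ᶠ w in 𝓝 z, w ∈ s} {z | ∀ᶠ w in 𝓝[≠] z, w ∉ s} :=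
    disjoint_left.mpr fun z hU hV =>
      ((hU.filter_mono nhdsWithin_le_nhds).and hV).exists.elim fun w hw => hw.2 hw.1
  exact hC.subset_or_subset isOpen_setOfPred_eventually_nhds
    isOpen_setOfPred_eventually_nhdsWithin hdisj h

theorem analytic_fredholm_dichotomy_general
    {K : Type*} [NormedAddCommGroup K] [InnerProductSpace ℂ K] [CompleteSpace K]
    (T S : K →L[ℂ] K) (hcpt : IsCompactOperator (⇑(T - S)))
    (C : Set ℂ) (z₀ : ℂ) (hz₀ : z₀ ∈ (spectrum ℂ T)ᶜ)
    (hC : C = connectedComponentIn (spectrum ℂ T)ᶜ z₀) :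
    ((∃ z ∈ C, z ∉ spectrum ℂ S) ∧
      ∀ z ∈ C, ¬ AccPt z (Filter.principal (spectrum ℂ S ∩ C))) ∨
    (∀ z ∈ C, LinearMap.ker ((S - z • (1 : K →L[ℂ] K) : K →L[ℂ] K) : K →ₗ[ℂ] K) ≠ ⊥) := by
  subst hC
  have hCρ : ∀ z ∈ connectedComponentIn (spectrum ℂ T)ᶜ z₀, z ∈ resolventSet ℂ T :=
    fun z hz => spectrum.notMem_iff.mp (connectedComponentIn_subset _ _ hz)
  have hCopen := (spectrum.isClosed T).isOpen_compl.connectedComponentIn (x := z₀)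
  have hz₀C := mem_connectedComponentIn hz₀
  rcases isPreconnected_connectedComponentIn.eventually_mem_or_eventually_notMem
    fun z hz => eventually_mem_spectrum_or_eventually_notMem_spectrum hcpt (hCρ z hz) with h | h
  · exact Or.inr fun z hz =>
      ker_sub_smul_one_ne_bot_of_mem_spectrum hcpt (hCρ z hz) (h z hz).self_of_nhds
  · refine Or.inl ⟨?_, fun z hz => ?_⟩
    · obtain ⟨w, hwS, hwC⟩ :=
        ((h z₀ hz₀C).and (mem_nhdsWithin_of_mem_nhds (hCopen.mem_nhds hz₀C))).exists
      exact ⟨w, hwC, hwS⟩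
    · rw [accPt_iff_frequently_nhdsNE, not_frequently]
      exact (h z hz).mono fun w hw hw' => hw hw'.1

/-- Theorem D.1 of the paper, analytic Fredholm theory: if `T − S` is
compact and `C` is a connected component of `ℂ \ σ(T)`, then either `C` meets the
resolvent set of `S`, in which case `σ(S) ∩ C` has no accumulation point in `C`, or every
point of `C` is an eigenvalue of `S`. -/
theorem analytic_fredholm_dichotomy
    {K : Type*} [NormedAddCommGroup K] [InnerProductSpace ℂ K] [CompleteSpace K]
    [TopologicalSpace.SeparableSpace K]
    (T S : K →L[ℂ] K) (hcpt : IsCompactOperator (⇑(T - S)))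
    (C : Set ℂ) (z₀ : ℂ) (hz₀ : z₀ ∈ (spectrum ℂ T)ᶜ)
    (hC : C = connectedComponentIn (spectrum ℂ T)ᶜ z₀) :
    ((∃ z ∈ C, z ∉ spectrum ℂ S) ∧
      ∀ z ∈ C, ¬ AccPt z (Filter.principal (spectrum ℂ S ∩ C))) ∨
    (∀ z ∈ C, LinearMap.ker ((S - z • (1 : K →L[ℂ] K) : K →L[ℂ] K) : K →ₗ[ℂ] K) ≠ ⊥) :=
  analytic_fredholm_dichotomy_general T S hcpt C z₀ hz₀ hC
end
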